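/- arXiv:2509.07776 — 2 statements merged into one kernel-verified Lean document; each statement's English description precedes it below -/
import Mathlib

section
/- Let K : (-∞,0) ∪ (0,∞) → ℝ be concave on (-∞,0) and on (0,∞). Then the generalized monotonicity condition lim_{t→-∞} K'(t) ≤ lim_{t→∞} K'(t) holds if and only if there exists a real constant c such that the function t ↦ K(t) − c·t is non-increasing on (-∞,0) and non-decreasing on (0,∞). -/
/-!
Wherever it exists, the derivative of a concave function on a half-line is antitone, and such
points are dense by Rademacher's theorem. Hence the limit `a` of `K'` at `-∞` is the supremum of
`K'` on `(-∞, 0)`, and since slopes of secants on `(-∞, 0)` lie below `K'` at points further left,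
`K t - c t` is antitone there iff `a ≤ c`. Symmetrically, `K t - c t` is monotone on `(0, ∞)` iff
`c ≤ b`. Finally `a ≤ b` forces both limits to be finite, since `a` bounds a value of `K'` from
above and `b` one from below.
-/

open Filter Set Topology MeasureTheory

theorem ConcaveOn.exists_differentiableAt_mem_Ioo {K : ℝ → ℝ} {s : Set ℝ} {x y : ℝ}
    (hK : ConcaveOn ℝ s K) (hs : IsOpen s) (hxy : x < y) (hsub : Icc x y ⊆ s) :
    ∃ t ∈ Ioo x y, DifferentiableAt ℝ K t := by
  obtain ⟨C, hC⟩ := ((hK.locallyLipschitzOn hs).mono hsub).exists_lipschitzOnWith_of_compact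
    isCompact_Icc
  have hae : ∀ᵐ t ∂volume.restrict (Ioo x y),
      t ∈ Ioo x y ∧ DifferentiableWithinAt ℝ K (Ioo x y) t := by
    filter_upwards [ae_restrict_mem measurableSet_Ioo,
      ae_restrict_of_ae (hC.mono Ioo_subset_Icc_self).ae_differentiableWithinAt_of_mem]
      with t ht hdiff using ⟨ht, hdiff ht⟩
  have : (ae (volume.restrict (Ioo x y))).NeBot := ae_restrict_neBot.2 (by simp [hxy])
  obtain ⟨t, ht, hdiff⟩ := hae.exists
  exact ⟨t, ht, hdiff.differentiableAt (isOpen_Ioo.mem_nhds ht)⟩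

theorem ConcaveOn.frequently_differentiableAt_atBot {K : ℝ → ℝ} {r : ℝ}
    (hK : ConcaveOn ℝ (Iio r) K) : ∃ᶠ t in atBot, t < r ∧ DifferentiableAt ℝ K t := by
  refine frequently_atBot.2 fun x ↦ ?_
  set y := min x r - 1
  obtain ⟨t, ht, hdiff⟩ := hK.exists_differentiableAt_mem_Ioo isOpen_Iio (sub_one_lt y)
    fun z hz ↦ mem_Iio.2 (by linarith [hz.2, min_le_right x r])
  exact ⟨t, by linarith [ht.2, min_le_left x r], by linarith [ht.2, min_le_right x r], hdiff⟩

theorem ConcaveOn.frequently_differentiableAt_atTop {K : ℝ → ℝ} {r : ℝ}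
    (hK : ConcaveOn ℝ (Ioi r) K) : ∃ᶠ t in atTop, r < t ∧ DifferentiableAt ℝ K t := by
  refine frequently_atTop.2 fun x ↦ ?_
  set y := max x r + 1
  obtain ⟨t, ht, hdiff⟩ := hK.exists_differentiableAt_mem_Ioo isOpen_Ioi (lt_add_one y)
    fun z hz ↦ mem_Ioi.2 (by linarith [hz.1, le_max_right x r])
  exact ⟨t, by linarith [ht.1, le_max_left x r], by linarith [ht.1, le_max_right x r], hdiff⟩

theorem ConcaveOn.deriv_le_deriv {K : ℝ → ℝ} {S : Set ℝ} {x y : ℝ} (hK : ConcaveOn ℝ S K)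
    (hx : x ∈ S) (hy : y ∈ S) (hxy : x < y) (hKx : DifferentiableAt ℝ K x)
    (hKy : DifferentiableAt ℝ K y) : deriv K y ≤ deriv K x :=
  (hK.deriv_le_slope hx hy hxy hKy).trans (hK.slope_le_deriv hx hy hxy hKx)

theorem antitoneOn_sub_mul_iff {f : ℝ → ℝ} {s : Set ℝ} {c : ℝ} :
    AntitoneOn (fun t ↦ f t - c * t) s ↔ ∀ x ∈ s, ∀ y ∈ s, x < y → slope f x y ≤ c := by
  refine ⟨fun h x hx y hy hxy ↦ ?_, fun h x hx y hy hxy ↦ ?_⟩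
  · rw [slope_def_field, div_le_iff₀ (sub_pos.2 hxy)]
    linarith [h hx hy hxy.le]
  · rcases hxy.eq_or_lt with rfl | hlt
    · rfl
    have := h x hx y hy hlt
    rw [slope_def_field, div_le_iff₀ (sub_pos.2 hlt)] at this
    dsimp only
    linarith

theorem monotoneOn_sub_mul_iff {f : ℝ → ℝ} {s : Set ℝ} {c : ℝ} :
    MonotoneOn (fun t ↦ f t - c * t) s ↔ ∀ x ∈ s, ∀ y ∈ s, x < y → c ≤ slope f x y := by
  refine ⟨fun h x hx y hy hxy ↦ ?_, fun h x hx y hy hxy ↦ ?_⟩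
  · rw [slope_def_field, le_div_iff₀ (sub_pos.2 hxy)]
    linarith [h hx hy hxy.le]
  · rcases hxy.eq_or_lt with rfl | hlt
    · rfl
    have := h x hx y hy hlt
    rw [slope_def_field, le_div_iff₀ (sub_pos.2 hlt)] at this
    dsimp only
    linarith

section DerivLimits

variable {K : ℝ → ℝ} {r c : ℝ} {a : EReal}

theorem ConcaveOn.coe_deriv_le_of_tendsto_atBot (hK : ConcaveOn ℝ (Iio r) K)
    (ha : Tendsto (fun t ↦ ((deriv K t : ℝ) : EReal))
      (atBot ⊓ 𝓟 {t | t < r ∧ DifferentiableAt ℝ K t}) (𝓝 a))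
    {u : ℝ} (hu : u < r) (hKu : DifferentiableAt ℝ K u) : ((deriv K u : ℝ) : EReal) ≤ a := by
  have := frequently_iff_neBot.1 hK.frequently_differentiableAt_atBot
  refine ge_of_tendsto ha ?_
  rw [eventually_inf_principal]
  filter_upwards [eventually_lt_atBot u] with t htu ⟨ht, hKt⟩
  exact EReal.coe_le_coe_iff.2 (hK.deriv_le_deriv ht hu htu hKt hKu)

theorem ConcaveOn.le_coe_deriv_of_tendsto_atTop (hK : ConcaveOn ℝ (Ioi r) K)
    (ha : Tendsto (fun t ↦ ((deriv K t : ℝ) : EReal))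
      (atTop ⊓ 𝓟 {t | r < t ∧ DifferentiableAt ℝ K t}) (𝓝 a))
    {u : ℝ} (hu : r < u) (hKu : DifferentiableAt ℝ K u) : a ≤ ((deriv K u : ℝ) : EReal) := by
  have := frequently_iff_neBot.1 hK.frequently_differentiableAt_atTop
  refine le_of_tendsto ha ?_
  rw [eventually_inf_principal]
  filter_upwards [eventually_gt_atTop u] with t htu ⟨ht, hKt⟩
  exact EReal.coe_le_coe_iff.2 (hK.deriv_le_deriv hu ht htu hKu hKt)

theorem ConcaveOn.antitoneOn_sub_mul_iff_of_tendsto_atBot (hK : ConcaveOn ℝ (Iio r) K)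
    (ha : Tendsto (fun t ↦ ((deriv K t : ℝ) : EReal))
      (atBot ⊓ 𝓟 {t | t < r ∧ DifferentiableAt ℝ K t}) (𝓝 a)) :
    AntitoneOn (fun t ↦ K t - c * t) (Iio r) ↔ a ≤ c := by
  have := frequently_iff_neBot.1 hK.frequently_differentiableAt_atBot
  rw [antitoneOn_sub_mul_iff]
  constructor
  · intro hslope
    refine le_of_tendsto ha ?_
    rw [eventually_inf_principal]
    refine .of_forall fun t ⟨ht, hKt⟩ ↦ EReal.coe_le_coe_iff.2 ?_
    have htt : t - 1 < t := sub_one_lt t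
    exact (hK.deriv_le_slope (htt.trans ht) ht htt hKt).trans
      (hslope _ (htt.trans ht) t ht htt)
  · intro hac x hx y hy hxy
    obtain ⟨u, ⟨hu, hKu⟩, hux⟩ :=
      (hK.frequently_differentiableAt_atBot.and_eventually (eventually_lt_atBot x)).exists
    calc slope K x y ≤ slope K u x := by
          rw [slope_def_field, slope_def_field]
          exact hK.slope_anti_adjacent hu hy hux hxy
      _ ≤ deriv K u := hK.slope_le_deriv hu hx hux hKu
      _ ≤ c := EReal.coe_le_coe_iff.1 ((hK.coe_deriv_le_of_tendsto_atBot ha hu hKu).trans hac)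

theorem ConcaveOn.monotoneOn_sub_mul_iff_of_tendsto_atTop (hK : ConcaveOn ℝ (Ioi r) K)
    (ha : Tendsto (fun t ↦ ((deriv K t : ℝ) : EReal))
      (atTop ⊓ 𝓟 {t | r < t ∧ DifferentiableAt ℝ K t}) (𝓝 a)) :
    MonotoneOn (fun t ↦ K t - c * t) (Ioi r) ↔ (c : EReal) ≤ a := by
  have := frequently_iff_neBot.1 hK.frequently_differentiableAt_atTop
  rw [monotoneOn_sub_mul_iff]
  constructor
  · intro hslope
    refine ge_of_tendsto ha ?_
    rw [eventually_inf_principal]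
    refine .of_forall fun t ⟨ht, hKt⟩ ↦ EReal.coe_le_coe_iff.2 ?_
    have htt : t < t + 1 := lt_add_one t
    exact (hslope t ht _ (ht.trans htt) htt).trans
      (hK.slope_le_deriv ht (ht.trans htt) htt hKt)
  · intro hca x hx y hy hxy
    obtain ⟨u, ⟨hu, hKu⟩, hyu⟩ :=
      (hK.frequently_differentiableAt_atTop.and_eventually (eventually_gt_atTop y)).exists
    calc (c : ℝ) ≤ deriv K u :=
          EReal.coe_le_coe_iff.1 (hca.trans (hK.le_coe_deriv_of_tendsto_atTop ha hu hKu))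
      _ ≤ slope K y u := hK.deriv_le_slope hy hu hyu hKu
      _ ≤ slope K x y := by
          rw [slope_def_field, slope_def_field]
          exact hK.slope_anti_adjacent hx hu hxy hyu

end DerivLimits

/-- For `K` concave on `(-∞,0)` and on `(0,∞)` with derivative limits `a`
at `-∞` and `b` at `+∞` (over the set where `K'` exists), the generalized monotonicity
condition `a ≤ b` holds iff there is a real constant `c` such that `t ↦ K t - c*t` is
non-increasing on `(-∞,0)` and non-decreasing on `(0,∞)`. -/
theorem GM_iff_exists_monotone_shift
    (K : ℝ → ℝ)
    (hK₁ : ConcaveOn ℝ (Set.Iio (0 : ℝ)) K)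
    (hK₂ : ConcaveOn ℝ (Set.Ioi (0 : ℝ)) K)
    (a b : EReal)
    (ha : Filter.Tendsto (fun t => ((deriv K t : ℝ) : EReal))
      (Filter.atBot ⊓ Filter.principal {t : ℝ | t < 0 ∧ DifferentiableAt ℝ K t}) (nhds a))
    (hb : Filter.Tendsto (fun t => ((deriv K t : ℝ) : EReal))
      (Filter.atTop ⊓ Filter.principal {t : ℝ | 0 < t ∧ DifferentiableAt ℝ K t}) (nhds b)) :
    a ≤ b ↔ ∃ c : ℝ,
      AntitoneOn (fun t => K t - c * t) (Set.Iio (0 : ℝ)) ∧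
      MonotoneOn (fun t => K t - c * t) (Set.Ioi (0 : ℝ)) := by
  simp only [hK₁.antitoneOn_sub_mul_iff_of_tendsto_atBot ha,
    hK₂.monotoneOn_sub_mul_iff_of_tendsto_atTop hb]
  refine ⟨fun hab ↦ ?_, fun ⟨c, hac, hcb⟩ ↦ hac.trans hcb⟩
  obtain ⟨u, hu, hKu⟩ := hK₁.frequently_differentiableAt_atBot.exists
  obtain ⟨v, hv, hKv⟩ := hK₂.frequently_differentiableAt_atTop.exists
  have ha_ne_bot : a ≠ ⊥ :=
    ne_bot_of_le_ne_bot (EReal.coe_ne_bot _) (hK₁.coe_deriv_le_of_tendsto_atBot ha hu hKu)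
  have hb_ne_top : b ≠ ⊤ :=
    ne_top_of_le_ne_top (EReal.coe_ne_top _) (hK₂.le_coe_deriv_of_tendsto_atTop hb hv hKv)
  lift a to ℝ using ⟨(hab.trans_lt hb_ne_top.lt_top).ne, ha_ne_bot⟩
  exact ⟨a, le_rfl, hab⟩
end

section
/- Let A and B be Hausdorff topological spaces with A pathwise connected and B pathwise connected and simply connected. If f : A → B is a proper local homeomorphism, then f is a (global) homeomorphism from A onto B. -/
/-!
The fibres of a proper local homeomorphism are compact and discrete, hence finite, and a closed
local homeomorphism with finite fibres out of a Hausdorff space is a covering map. A path joining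
two points of a fibre maps to a loop, which is null-homotopic because the base is simply
connected; lifting that homotopy shows the path is homotopic rel endpoints to a constant path,
so the two points coincide. The range is open, closed and nonempty, so `f` is also onto.
-/

section

open Set unitInterval

variable {A B : Type*} [TopologicalSpace A] [TopologicalSpace B] {f : A → B}

theorem IsProperMap.finite_preimage_singleton_of_isLocalHomeomorph (hprop : IsProperMap f)
    (hloc : IsLocalHomeomorph f) (b : B) : (f ⁻¹' {b}).Finite :=
  (hprop.isCompact_preimage isCompact_singleton).finite <|
    (hloc.isLocalHomeomorphOn.mono (subset_univ _)).isDiscrete_of_image <|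
      (subsingleton_singleton.anti (image_preimage_subset f {b})).isDiscrete

theorem IsProperMap.isCoveringMap_of_isLocalHomeomorph [T2Space A] (hprop : IsProperMap f)
    (hloc : IsLocalHomeomorph f) : IsCoveringMap f :=
  isCoveringMap_iff_isCoveringMapOn_univ.mpr <|
    hprop.isClosedMap.isCoveringMapOn_of_isLocalHomeomorphOn
      (fun b _ ↦ hprop.finite_preimage_singleton_of_isLocalHomeomorph hloc b)
      (hloc.isLocalHomeomorphOn.mono (subset_univ _))

theorem IsCoveringMap.injective_of_simplyConnectedSpace [PathConnectedSpace A]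
    [SimplyConnectedSpace B] (cov : IsCoveringMap f) : Function.Injective f := by
  intro a₁ a₂ h
  obtain ⟨γ⟩ := PathConnectedSpace.joined a₁ a₂
  have hγ : (γ : C(I, A)).HomotopicRel (.const I a₁) {0, 1} :=
    (cov.homotopicRel_iff_comp ⟨0, .inl rfl, γ.source⟩).mpr <|
      SimplyConnectedSpace.paths_homotopic ((γ.map cov.continuous).cast rfl h) (.refl (f a₁))
  simpa using hγ.some.eq_fst 1 (.inr rfl)

theorem IsOpenMap.surjective_of_isClosedMap [Nonempty A] [ConnectedSpace B]
    (ho : IsOpenMap f) (hc : IsClosedMap f) : Function.Surjective f :=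
  range_eq_univ.mp <|
    IsClopen.eq_univ ⟨hc.isClosed_range, ho.isOpen_range⟩ (range_nonempty f)

end

theorem proper_localHomeo_is_homeo_general
    {A B : Type*} [TopologicalSpace A] [TopologicalSpace B]
    [T2Space A]
    [PathConnectedSpace A] [SimplyConnectedSpace B]
    (f : A → B) (hloc : IsLocalHomeomorph f) (hprop : IsProperMap f) :
    IsHomeomorph f :=
  isHomeomorph_iff_continuous_isClosedMap_bijective.mpr
    ⟨hloc.continuous, hprop.isClosedMap,
      (hprop.isCoveringMap_of_isLocalHomeomorph hloc).injective_of_simplyConnectedSpace,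
      hloc.isOpenMap.surjective_of_isClosedMap hprop.isClosedMap⟩

/-- Ho's theorem: a proper local homeomorphism from a pathwise connected
Hausdorff space onto a pathwise connected, simply connected Hausdorff space is a global
homeomorphism. -/
theorem proper_localHomeo_is_homeo
    {A B : Type*} [TopologicalSpace A] [TopologicalSpace B]
    [T2Space A] [T2Space B]
    [PathConnectedSpace A] [PathConnectedSpace B] [SimplyConnectedSpace B]
    (f : A → B) (hloc : IsLocalHomeomorph f) (hprop : IsProperMap f) :
    IsHomeomorph f :=
  proper_localHomeo_is_homeo_general f hloc hprop
end
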